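/- arXiv:2512.04729 — 3 statements merged into one kernel-verified Lean document; each statement's English description precedes it below -/
import Mathlib

section
/- Every f ∈ BV(0,1) can be represented as f(x) = ∫₀¹ H̄_y(x) dDf(y) + η for almost every x ∈ (0,1), where η is a constant. -/
/-!
Let `G x = Df (x, ∞)` be the tail of the derivative measure. Since `H̄_y(x) = y - 1_{x < y}`,
the integral `∫ H̄_y(x) dDf(y)` equals `∫ y dDf(y) - G x`. By Fubini, `∫ G φ' = ∫ φ dDf` for every
test function `φ`, so `f + G` has vanishing distributional derivative on `(0, 1)` and is a.e.
constant by the du Bois-Reymond lemma.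
-/

open MeasureTheory

/-- The zero-mean shifted Heaviside function: `y - 1` for `x < y`, `y` for `x ≥ y`. -/
noncomputable def Hbar (y x : ℝ) : ℝ := if x < y then y - 1 else y

/-- Integral of a real function against a signed measure (via the Jordan decomposition). -/
noncomputable def sint (ν : SignedMeasure ℝ) (g : ℝ → ℝ) : ℝ :=
  (∫ y, g y ∂ν.toJordanDecomposition.posPart) -
    ∫ y, g y ∂ν.toJordanDecomposition.negPart

/-- `ν` is the derivative (Radon) measure `Df` of `f` on (0,1):
`∫₀¹ f φ' dx = -∫₀¹ φ dDf` for all φ ∈ C¹_c(0,1). -/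
def IsDerivMeasure (f : ℝ → ℝ) (ν : SignedMeasure ℝ) : Prop :=
  ∀ φ : ℝ → ℝ, ContDiff ℝ 1 φ → tsupport φ ⊆ Set.Ioo 0 1 →
    ∫ x in (0:ℝ)..1, f x * deriv φ x = -(sint ν φ)

open Set Filter

lemma Integrable.mul_continuous_of_hasCompactSupport {μ : Measure ℝ} {h g : ℝ → ℝ}
    (hh : Integrable h μ) (hg : Continuous g) (hgc : HasCompactSupport g) :
    Integrable (fun x => h x * g x) μ :=
  hh.mul_of_top_left (hg.memLp_top_of_hasCompactSupport hgc _)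

section DuBoisReymond

variable {a b : ℝ}

lemma hasCompactSupport_of_tsupport_subset_Ioo {g : ℝ → ℝ} (hg : tsupport g ⊆ Ioo a b) :
    HasCompactSupport g :=
  isCompact_Icc.of_isClosed_subset (isClosed_tsupport g) (hg.trans Ioo_subset_Icc_self)

lemma IsCompact.exists_subset_Icc_of_subset_Ioo (hab : a < b) {K : Set ℝ} (hK : IsCompact K)
    (hKab : K ⊆ Ioo a b) : ∃ c d, a < c ∧ c ≤ d ∧ d < b ∧ K ⊆ Icc c d := by
  rcases K.eq_empty_or_nonempty with rfl | hne
  · exact ⟨(a + b) / 2, (a + b) / 2, by linarith, le_rfl, by linarith, empty_subset _⟩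
  · exact ⟨sInf K, sSup K, (hKab (hK.sInf_mem hne)).1, csInf_le_csSup hne hK.bddBelow hK.bddAbove,
      (hKab (hK.sSup_mem hne)).2, fun x hx => ⟨csInf_le hK.bddBelow hx, le_csSup hK.bddAbove hx⟩⟩

lemma exists_continuous_tsupport_subset_Ioo_integral_eq_one (hab : a < b) :
    ∃ χ : ℝ → ℝ, Continuous χ ∧ tsupport χ ⊆ Ioo a b ∧ ∫ x, χ x = 1 := by
  let β : ContDiffBump ((a + b) / 2) := ⟨(b - a) / 4, (b - a) / 3, by linarith, by linarith⟩
  refine ⟨β.normed volume, β.continuous_normed, ?_, β.integral_normed⟩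
  rw [β.tsupport_normed_eq, Real.closedBall_eq_Icc]
  exact Icc_subset_Ioo (by simp only [β]; linarith) (by simp only [β]; linarith)

lemma exists_contDiff_tsupport_subset_Ioo_deriv_eq (hab : a < b) {ψ : ℝ → ℝ}
    (hψ : Continuous ψ) (hψab : tsupport ψ ⊆ Ioo a b) (hψ0 : ∫ x, ψ x = 0) :
    ∃ φ : ℝ → ℝ, ContDiff ℝ 1 φ ∧ tsupport φ ⊆ Ioo a b ∧ deriv φ = ψ := by
  obtain ⟨c, d, hac, hcd, hdb, hψcd⟩ :=
    (hasCompactSupport_of_tsupport_subset_Ioo hψab).exists_subset_Icc_of_subset_Ioo hab hψab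
  have hψ_eq_zero : ∀ t, t ∉ Icc c d → ψ t = 0 := fun t ht =>
    image_eq_zero_of_notMem_tsupport fun h => ht (hψcd h)
  have hderiv : ∀ x, HasDerivAt (fun x => ∫ t in a..x, ψ t) (ψ x) x := fun x =>
    (hψ.integral_hasStrictDerivAt a x).hasDerivAt
  have hsupp : Function.support (fun x => ∫ t in a..x, ψ t) ⊆ Icc c d := by
    intro x hx
    by_contra hx'
    refine hx ?_
    dsimp only
    rcases not_and_or.1 hx' with hxc | hdx
    · have : EqOn ψ 0 (uIcc a x) := fun t ht =>
        hψ_eq_zero t fun h => (h.1.trans ht.2).not_gt (max_lt hac (not_le.1 hxc))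
      simp only [intervalIntegral.integral_congr this, Pi.zero_apply,
        intervalIntegral.integral_zero]
    · rw [intervalIntegral.integral_of_le (by linarith [not_le.1 hdx]), ← hψ0]
      exact setIntegral_eq_integral_of_forall_compl_eq_zero fun t ht => hψ_eq_zero t fun h =>
        ht ⟨hac.trans_le h.1, h.2.trans (not_le.1 hdx).le⟩
  refine ⟨fun x => ∫ t in a..x, ψ t, ?_, ?_, funext fun x => (hderiv x).deriv⟩
  · exact contDiff_one_iff_deriv.2 ⟨fun x => (hderiv x).differentiableAt,
      by rwa [funext fun x => (hderiv x).deriv]⟩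
  · exact (closure_minimal hsupp isClosed_Icc).trans (Icc_subset_Ioo hac hdb)

lemma setIntegral_Ioo_eq_integral_of_tsupport_subset {g : ℝ → ℝ} (hg : tsupport g ⊆ Ioo a b) :
    ∫ x in Ioo a b, g x = ∫ x, g x :=
  setIntegral_eq_integral_of_forall_compl_eq_zero fun _ hx =>
    image_eq_zero_of_notMem_tsupport fun h => hx (hg h)

/-- The du Bois-Reymond lemma. -/
theorem exists_ae_eq_const_of_integral_mul_deriv_eq_zero (hab : a < b) {h : ℝ → ℝ}
    (hh : IntegrableOn h (Ioo a b))
    (hderiv : ∀ φ : ℝ → ℝ, ContDiff ℝ 1 φ → tsupport φ ⊆ Ioo a b →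
      ∫ x in Ioo a b, h x * deriv φ x = 0) :
    ∃ η : ℝ, ∀ᵐ x ∂(volume.restrict (Ioo a b)), h x = η := by
  obtain ⟨χ, hχ, hχab, hχ1⟩ := exists_continuous_tsupport_subset_Ioo_integral_eq_one hab
  set η := ∫ x in Ioo a b, h x * χ x
  -- subtracting the right multiple of `χ` gives a test function with zero mean, i.e. a derivative
  have hmean : ∀ g : ℝ → ℝ, Continuous g → tsupport g ⊆ Ioo a b →
      ∫ x in Ioo a b, h x * g x = (∫ x, g x) * η := by
    intro g hg hgab
    have hgc := hasCompactSupport_of_tsupport_subset_Ioo hgab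
    have hχc := hasCompactSupport_of_tsupport_subset_Ioo hχab
    set ψ := fun x => g x - (∫ x, g x) * χ x
    have hψ : Continuous ψ := hg.sub (continuous_const.mul hχ)
    have hψab : tsupport ψ ⊆ Ioo a b := (tsupport_sub _ _).trans
      (union_subset hgab (tsupport_mul_subset_right.trans hχab))
    have hψ0 : ∫ x, ψ x = 0 := by
      rw [integral_sub (hg.integrable_of_hasCompactSupport hgc)
        ((hχ.integrable_of_hasCompactSupport hχc).const_mul _),
        integral_const_mul, hχ1, mul_one, sub_self]
    obtain ⟨φ, hφ, hφab, hφψ⟩ := exists_contDiff_tsupport_subset_Ioo_deriv_eq hab hψ hψab hψ0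
    have h0 := hderiv φ hφ hφab
    simp only [hφψ, ψ, mul_sub, mul_left_comm (h _)] at h0
    rw [integral_sub (Integrable.mul_continuous_of_hasCompactSupport hh hg hgc)
      ((Integrable.mul_continuous_of_hasCompactSupport hh hχ hχc).const_mul _),
      integral_const_mul] at h0
    exact sub_eq_zero.1 h0
  refine ⟨η, ?_⟩
  have hzero : ∀ᵐ x ∂(volume.restrict (Ioo a b)), x ∈ Ioo a b → h x - η = 0 := by
    refine isOpen_Ioo.ae_eq_zero_of_integral_contDiff_smul_eq_zero
      ((hh.sub (integrableOn_const measure_Ioo_lt_top.ne)).locallyIntegrable.locallyIntegrableOn _)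
      fun g hg hgc hgab => ?_
    have hgh : Integrable (fun x => h x * g x) (volume.restrict (Ioo a b)) :=
      Integrable.mul_continuous_of_hasCompactSupport hh hg.continuous hgc
    have hg1 : Integrable g (volume.restrict (Ioo a b)) :=
      (hg.continuous.integrable_of_hasCompactSupport hgc).restrict
    simp only [smul_eq_mul, mul_sub, mul_comm (g _) (h _)]
    rw [integral_sub hgh (hg1.mul_const η), integral_mul_const,
      setIntegral_Ioo_eq_integral_of_tsupport_subset hgab, hmean g hg.continuous hgab, sub_self]
  filter_upwards [hzero, ae_restrict_mem measurableSet_Ioo] with x hx hxab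
  exact sub_eq_zero.1 (hx hxab)

end DuBoisReymond

lemma integral_Iic_deriv_of_hasCompactSupport {φ : ℝ → ℝ} (hφ : ContDiff ℝ 1 φ)
    (hcs : HasCompactSupport φ) (y : ℝ) : ∫ x in Iic y, deriv φ x = φ y := by
  rw [integral_Iic_of_hasDerivAt_of_tendsto'
    (fun x _ => ((hφ.differentiable one_ne_zero) x).hasDerivAt)
    ((hφ.continuous_deriv le_rfl).integrable_of_hasCompactSupport hcs.deriv).integrableOn
    (hcs.is_zero_at_infty.mono_left atBot_le_cocompact), sub_zero]

section Tail

variable (μ : Measure ℝ) [IsFiniteMeasure μ]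

lemma antitone_measureReal_Ioi : Antitone fun x => μ.real (Ioi x) :=
  fun _ _ hxy => measureReal_mono (Ioi_subset_Ioi hxy)

lemma integrable_measureReal_Ioi_mul {g : ℝ → ℝ} (hg : Integrable g) :
    Integrable (fun x => μ.real (Ioi x) * g x) :=
  hg.bdd_mul (antitone_measureReal_Ioi μ).measurable.aestronglyMeasurable
    (Eventually.of_forall fun _ => by
      rw [Real.norm_of_nonneg measureReal_nonneg]
      exact measureReal_mono (subset_univ _))

theorem integral_measureReal_Ioi_mul_deriv {φ : ℝ → ℝ} (hφ : ContDiff ℝ 1 φ)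
    (hcs : HasCompactSupport φ) : ∫ x, μ.real (Ioi x) * deriv φ x = ∫ y, φ y ∂μ := by
  have hφ' : Continuous (deriv φ) := hφ.continuous_deriv le_rfl
  set F : ℝ → ℝ → ℝ := fun x y => if x < y then deriv φ x else 0
  have hF : Integrable (Function.uncurry F) (volume.prod μ) := by
    refine ((hφ'.integrable_of_hasCompactSupport hcs.deriv).norm.comp_fst μ).mono'
      ((StronglyMeasurable.ite (measurableSet_lt measurable_fst measurable_snd)
        (hφ'.comp continuous_fst).stronglyMeasurable stronglyMeasurable_const).aestronglyMeasurable)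
      (Eventually.of_forall fun z => ?_)
    by_cases h : z.1 < z.2 <;> simp [F, h, Function.uncurry]
  have hFx : ∀ x, ∫ y, F x y ∂μ = μ.real (Ioi x) * deriv φ x := fun x => by
    rw [← smul_eq_mul, ← integral_indicator_const _ measurableSet_Ioi]
    congr 1
  have hFy : ∀ y, ∫ x, F x y = φ y := fun y => by
    rw [← integral_Iic_deriv_of_hasCompactSupport hφ hcs y, integral_Iic_eq_integral_Iio,
      ← integral_indicator measurableSet_Iio]
    congr 1
  simp_rw [← hFx, ← hFy]
  exact integral_integral_swap hF

end Tail

lemma integral_Hbar {μ : Measure ℝ} [IsFiniteMeasure μ] (hμ : Integrable (fun y => y) μ) (x : ℝ) :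
    ∫ y, Hbar y x ∂μ = ∫ y, y ∂μ - μ.real (Ioi x) := by
  have : (fun y => Hbar y x) = fun y => y - (Ioi x).indicator 1 y := by
    funext y
    by_cases h : x < y <;> simp [Hbar, h]
  have hind : Integrable (fun y => (Ioi x).indicator (1 : ℝ → ℝ) y) μ :=
    (integrable_const 1).indicator measurableSet_Ioi
  rw [this, integral_sub hμ hind, integral_indicator_one measurableSet_Ioi]

lemma integrable_id_of_measure_compl_Ioo_eq_zero {μ : Measure ℝ} [IsFiniteMeasure μ] {a b : ℝ}
    (h : μ (Ioo a b)ᶜ = 0) : Integrable (fun y => y) μ := by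
  refine Integrable.of_bound aestronglyMeasurable_id (max |a| |b|) ?_
  filter_upwards [mem_ae_iff.2 h] with y hy
  exact abs_le_max_abs_abs hy.1.le hy.2.le

section Signed

variable (ν : SignedMeasure ℝ)

local notation "μ₊" => ν.toJordanDecomposition.posPart
local notation "μ₋" => ν.toJordanDecomposition.negPart

lemma signedMeasure_Ioi_eq_sub (x : ℝ) : ν (Ioi x) = μ₊.real (Ioi x) - μ₋.real (Ioi x) :=
  ν.apply_eq_posPart_real_sub_negPart_real measurableSet_Ioi

lemma integrableOn_signedMeasure_Ioi {s : Set ℝ} (hs : IsCompact s) :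
    IntegrableOn (fun x => ν (Ioi x)) s := by
  simp only [signedMeasure_Ioi_eq_sub]
  refine IntegrableOn.sub ?_ ?_ <;>
    exact ((antitone_measureReal_Ioi _).antitoneOn s).integrableOn_isCompact hs

lemma integrable_signedMeasure_Ioi_mul {g : ℝ → ℝ} (hg : Integrable g) :
    Integrable (fun x => ν (Ioi x) * g x) := by
  simp only [signedMeasure_Ioi_eq_sub, sub_mul]
  exact (integrable_measureReal_Ioi_mul _ hg).sub (integrable_measureReal_Ioi_mul _ hg)

theorem integral_signedMeasure_Ioi_mul_deriv {φ : ℝ → ℝ} (hφ : ContDiff ℝ 1 φ)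
    (hcs : HasCompactSupport φ) : ∫ x, ν (Ioi x) * deriv φ x = sint ν φ := by
  have hφ' : Integrable (deriv φ) :=
    (hφ.continuous_deriv le_rfl).integrable_of_hasCompactSupport hcs.deriv
  simp only [signedMeasure_Ioi_eq_sub, sub_mul]
  rw [integral_sub (integrable_measureReal_Ioi_mul _ hφ') (integrable_measureReal_Ioi_mul _ hφ'),
    integral_measureReal_Ioi_mul_deriv _ hφ hcs, integral_measureReal_Ioi_mul_deriv _ hφ hcs, sint]

lemma sint_Hbar (hp : Integrable (fun y => y) μ₊) (hn : Integrable (fun y => y) μ₋) (x : ℝ) :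
    sint ν (fun y => Hbar y x) = sint ν (fun y => y) - ν (Ioi x) := by
  rw [sint, sint, integral_Hbar hp, integral_Hbar hn, signedMeasure_Ioi_eq_sub]
  ring

end Signed

theorem IsDerivMeasure.integral_add_signedMeasure_Ioi_mul_deriv_eq_zero {f : ℝ → ℝ}
    {ν : SignedMeasure ℝ} (hν : IsDerivMeasure f ν) (hf : IntegrableOn f (Ioo 0 1))
    {φ : ℝ → ℝ} (hφ : ContDiff ℝ 1 φ) (hφ01 : tsupport φ ⊆ Ioo 0 1) :
    ∫ x in Ioo 0 1, (f x + ν (Ioi x)) * deriv φ x = 0 := by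
  have hcs := hasCompactSupport_of_tsupport_subset_Ioo hφ01
  have hφ' : Continuous (deriv φ) := hφ.continuous_deriv le_rfl
  have hf_int : ∫ x in Ioo 0 1, f x * deriv φ x = -sint ν φ := by
    rw [← integral_Ioc_eq_integral_Ioo, ← intervalIntegral.integral_of_le zero_le_one]
    exact hν φ hφ hφ01
  have hν_int : ∫ x in Ioo 0 1, ν (Ioi x) * deriv φ x = sint ν φ := by
    rw [setIntegral_Ioo_eq_integral_of_tsupport_subset
      (tsupport_mul_subset_right.trans (tsupport_deriv_subset.trans hφ01))]
    exact integral_signedMeasure_Ioi_mul_deriv ν hφ hcs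
  simp only [add_mul]
  have hφ'_int : Integrable (deriv φ) := hφ'.integrable_of_hasCompactSupport hcs.deriv
  rw [integral_add (Integrable.mul_continuous_of_hasCompactSupport hf hφ' hcs.deriv)
    (integrable_signedMeasure_Ioi_mul ν hφ'_int).integrableOn, hf_int, hν_int, neg_add_cancel]

/-- Every f ∈ BV(0,1) can be represented as
`f(x) = ∫₀¹ H̄_y(x) dDf(y) + η` for a.e. x ∈ (0,1), for some constant η. -/
theorem stmt3 (f : ℝ → ℝ) (ν : SignedMeasure ℝ)
    (hf : IntegrableOn f (Set.Ioo 0 1)) (hν : IsDerivMeasure f ν)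
    (hsupp : ν.totalVariation (Set.Ioo (0:ℝ) 1)ᶜ = 0) :
    ∃ η : ℝ, ∀ᵐ x ∂(volume.restrict (Set.Ioo (0:ℝ) 1)),
      f x = sint ν (fun y => Hbar y x) + η := by
  rw [SignedMeasure.totalVariation, Measure.add_apply, add_eq_zero] at hsupp
  obtain ⟨η, hη⟩ := exists_ae_eq_const_of_integral_mul_deriv_eq_zero zero_lt_one
    (hf.add ((integrableOn_signedMeasure_Ioi ν isCompact_Icc).mono_set Ioo_subset_Icc_self))
    fun φ hφ hφ01 => hν.integral_add_signedMeasure_Ioi_mul_deriv_eq_zero hf hφ hφ01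
  refine ⟨η - sint ν (fun y => y), ?_⟩
  filter_upwards [hη] with x hx
  rw [sint_Hbar ν (integrable_id_of_measure_compl_Ioo_eq_zero hsupp.1)
    (integrable_id_of_measure_compl_Ioo_eq_zero hsupp.2)]
  linarith [show f x + ν (Ioi x) = η from hx]
end

section
/- Weighted sparsity recovery of a parallel-image source: let K : M(Ω) → L²(E) be bounded linear with kernel representation Kμ = ∫_Ω k(x,·) dμ(x), define the weight w̃(x) = ‖Kδ_x‖_{L²(E)}, and let μ* = μ_R be the (positive) measure with density χ_R. Assume there exist a continuous τ > 0 on R and a point x̄ ∈ R with Kδ_z = τ(z) Kδ_{x̄} for all z ∈ R. Then μ* minimizes ‖μ‖_{M_w̃(Ω)} = ∫_Ω w̃ d|μ| subject to Kμ = Kμ*. -/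
open MeasureTheory

/-!
On `R` the kernel is a nonnegative multiple `τ z • κ x̄` of a single vector, so the integral of
`κ` over `R` loses nothing to cancellation: `‖∫_R κ‖ = ∫_R ‖κ‖`. For any signed measure with the
same image, the triangle inequality for Bochner integrals over the Jordan parts gives
`‖∫_R κ‖ = ‖∫ κ dμ⁺ - ∫ κ dμ⁻‖ ≤ ∫ ‖κ‖ d|μ|`.
-/

section

variable {α E : Type*} [MeasurableSpace α] [NormedAddCommGroup E] [NormedSpace ℝ E]

theorem norm_integral_eq_integral_norm_of_ae_eq_smul [CompleteSpace E] {ν : Measure α}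
    {f : α → E} {c : α → ℝ} (v : E) (hc : 0 ≤ᵐ[ν] c) (hf : ∀ᵐ x ∂ν, f x = c x • v) :
    ‖∫ x, f x ∂ν‖ = ∫ x, ‖f x‖ ∂ν := by
  have hnorm : ∀ᵐ x ∂ν, ‖f x‖ = c x * ‖v‖ := by
    filter_upwards [hf, hc] with x hfx hcx
    rw [hfx, norm_smul, Real.norm_of_nonneg hcx]
  rw [integral_congr_ae hf, integral_congr_ae hnorm, integral_smul_const, integral_mul_const,
    norm_smul, Real.norm_of_nonneg (integral_nonneg_of_ae hc)]

theorem MeasureTheory.SignedMeasure.norm_integral_posPart_sub_negPart_le (μ : SignedMeasure α) {f : α → E}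
    (hf : Integrable f μ.totalVariation) :
    ‖(∫ x, f x ∂μ.toJordanDecomposition.posPart) - ∫ x, f x ∂μ.toJordanDecomposition.negPart‖
      ≤ ∫ x, ‖f x‖ ∂μ.totalVariation := by
  obtain ⟨hpos, hneg⟩ := integrable_add_measure.mp hf
  calc _ ≤ ‖∫ x, f x ∂μ.toJordanDecomposition.posPart‖
          + ‖∫ x, f x ∂μ.toJordanDecomposition.negPart‖ := norm_sub_le _ _
    _ ≤ (∫ x, ‖f x‖ ∂μ.toJordanDecomposition.posPart)
          + ∫ x, ‖f x‖ ∂μ.toJordanDecomposition.negPart :=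
        add_le_add (norm_integral_le_integral_norm _) (norm_integral_le_integral_norm _)
    _ = ∫ x, ‖f x‖ ∂μ.totalVariation := (integral_add_measure hpos.norm hneg.norm).symm

end

theorem stmt17_general {α H : Type*} [MeasureSpace α]
    [NormedAddCommGroup H] [InnerProductSpace ℝ H] [CompleteSpace H]
    (κ : α → H)
    (R : Set α) (hRmeas : MeasurableSet R)
    (xbar : α)
    (τ : α → ℝ) (hτ : ∀ z ∈ R, 0 < τ z ∧ κ z = τ z • κ xbar) :
    ∀ μ : SignedMeasure α,
      Integrable κ μ.totalVariation →
      ((∫ x, κ x ∂μ.toJordanDecomposition.posPart) -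
          ∫ x, κ x ∂μ.toJordanDecomposition.negPart) = ∫ x in R, κ x →
      (∫ x in R, ‖κ x‖) ≤ ∫ x, ‖κ x‖ ∂μ.totalVariation := by
  intro μ hint hK
  have hR : ∀ᵐ z ∂volume.restrict R, 0 < τ z ∧ κ z = τ z • κ xbar :=
    ae_restrict_of_forall_mem hRmeas hτ
  calc (∫ x in R, ‖κ x‖) = ‖∫ x in R, κ x‖ :=
        (norm_integral_eq_integral_norm_of_ae_eq_smul (κ xbar) (hR.mono fun _ h ↦ h.1.le)
          (hR.mono fun _ h ↦ h.2)).symm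
    _ ≤ ∫ x, ‖κ x‖ ∂μ.totalVariation := hK ▸ SignedMeasure.norm_integral_posPart_sub_negPart_le μ hint

/-- Weighted sparsity recovery of a parallel-image source. `κ x = K δ_x ∈ L²(E)` (modeled
as a Hilbert space `H`) is the kernel of `K : M(Ω) → L²(E)`, so that
`Kμ = ∫ κ dμ` (via the Jordan decomposition for a signed measure `μ`), and the weight is
`w̃(x) = ‖K δ_x‖ = ‖κ x‖`, bounded between positive constants. The true source is
`μ* = μ_R`, the measure with density `χ_R`, so `Kμ* = ∫_R κ` and
`‖μ*‖_{M_w̃} = ∫_R w̃`. If `Kδ_z = τ(z) Kδ_{x̄}` with `τ(z) > 0` on `R` for some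
`x̄ ∈ R`, then `μ*` minimizes `‖μ‖_{M_w̃} = ∫ w̃ d|μ|` subject to `Kμ = Kμ*`. -/
theorem stmt17 {α H : Type*} [MeasureSpace α]
    [NormedAddCommGroup H] [InnerProductSpace ℝ H] [CompleteSpace H]
    (κ : α → H)
    (R : Set α) (hRmeas : MeasurableSet R) (hRfin : volume R ≠ ⊤)
    (hκR : Integrable κ (volume.restrict R))
    (wmin wmax : ℝ) (hwmin : 0 < wmin)
    (hw : ∀ x : α, wmin ≤ ‖κ x‖ ∧ ‖κ x‖ ≤ wmax)
    (xbar : α) (hxbar : xbar ∈ R)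
    (τ : α → ℝ) (hτ : ∀ z ∈ R, 0 < τ z ∧ κ z = τ z • κ xbar) :
    ∀ μ : SignedMeasure α,
      Integrable κ μ.totalVariation →
      ((∫ x, κ x ∂μ.toJordanDecomposition.posPart) -
          ∫ x, κ x ∂μ.toJordanDecomposition.negPart) = ∫ x in R, κ x →
      (∫ x in R, ‖κ x‖) ≤ ∫ x, ‖κ x‖ ∂μ.totalVariation :=
  stmt17_general κ R hRmeas xbar τ hτ
end

section
/- Convergence of hybrid regularized solutions as α → 0: under the hypotheses of the preceding bounds, assume additionally that f* is the unique minimizer of TV_w over the solution set S = argmin{‖f L^n‖_{M_w̃} : f ∈ BV(Ω), K(f L^n) = K(f* L^n)}. Then f_α → f* in L¹(Ω) as α → 0. -/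
open MeasureTheory Filter

/-- Convergence of hybrid regularized solutions as α → 0: `F a` is, for each `a > 0`, a
minimizer of `a·TV_w + Nw` over the feasible set `{f : K(f Lⁿ) = K(f* Lⁿ)}`; `f*` is a
sparsity-optimal feasible point which is the unique `TV_w`-minimizer (in the L¹ sense)
among sparsity-optimal feasible points. Under the tools used in the proof — BV-type
compactness of feasible families with bounded `TV_w` and `Nw` (`hcompact`), closedness of
the feasible set under L¹ convergence (`hclosed`), and L¹ lower semicontinuity of `Nw`
and `TV_w` (`hNlsc`, `hTVlsc`) — one has `F a → f*` in `L¹(Ω, μ)` as `a → 0⁺`. -/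
theorem stmt19 {X : Type*} [MeasurableSpace X] (μ : Measure X)
    (feasible : Set (X → ℝ)) (TVw Nw : (X → ℝ) → ℝ)
    (fstar : X → ℝ) (F : ℝ → X → ℝ)
    (hstar_mem : fstar ∈ feasible)
    (hstar_opt : ∀ g ∈ feasible, Nw fstar ≤ Nw g)
    (hF : ∀ a : ℝ, 0 < a → F a ∈ feasible ∧
      ∀ g ∈ feasible, a * TVw (F a) + Nw (F a) ≤ a * TVw g + Nw g)
    (hcompact : ∀ g : ℕ → X → ℝ, (∀ n, g n ∈ feasible) →
      (∀ n, TVw (g n) ≤ TVw fstar) → (∀ n, Nw (g n) ≤ Nw fstar + 1) →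
      ∃ (φ : ℕ → ℕ) (h : X → ℝ), StrictMono φ ∧
        Tendsto (fun n => ∫ x, |g (φ n) x - h x| ∂μ) atTop (nhds 0))
    (hclosed : ∀ (g : ℕ → X → ℝ) (h : X → ℝ), (∀ n, g n ∈ feasible) →
      Tendsto (fun n => ∫ x, |g n x - h x| ∂μ) atTop (nhds 0) → h ∈ feasible)
    (hNlsc : ∀ (g : ℕ → X → ℝ) (h : X → ℝ), (∀ n, g n ∈ feasible) →
      Tendsto (fun n => ∫ x, |g n x - h x| ∂μ) atTop (nhds 0) →
      Nw h ≤ liminf (fun n => Nw (g n)) atTop)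
    (hTVlsc : ∀ (g : ℕ → X → ℝ) (h : X → ℝ), (∀ n, g n ∈ feasible) →
      Tendsto (fun n => ∫ x, |g n x - h x| ∂μ) atTop (nhds 0) →
      TVw h ≤ liminf (fun n => TVw (g n)) atTop)
    (huniq : ∀ g ∈ feasible, Nw g = Nw fstar → TVw g ≤ TVw fstar →
      ∫ x, |g x - fstar x| ∂μ = 0) :
    Tendsto (fun a => ∫ x, |F a x - fstar x| ∂μ)
      (nhdsWithin 0 (Set.Ioi 0)) (nhds 0) := by
  by_contra hcon
  rw [Metric.tendsto_nhdsWithin_nhds] at hcon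
  push_neg at hcon
  obtain ⟨ε, hε, hba⟩ := hcon
  set C : ℝ := max (TVw fstar - TVw (F 1)) 0 with hCdef
  have hC0 : (0:ℝ) ≤ C := le_max_right _ _
  have hC1pos : (0:ℝ) < C + 1 := by linarith
  -- choose the sequence a n
  have hA : ∀ n : ℕ, ∃ b : ℝ, 0 < b ∧ b < min (1/((n:ℝ)+1)) (1/(C+1)) ∧
      ε ≤ ∫ x, |F b x - fstar x| ∂μ := by
    intro n
    have hδ : (0:ℝ) < min (1/((n:ℝ)+1)) (1/(C+1)) := by
      apply lt_min
      · positivity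
      · positivity
    obtain ⟨x, hx1, hx2, hx3⟩ := hba _ hδ
    refine ⟨x, hx1, ?_, ?_⟩
    · rwa [Real.dist_eq, sub_zero, abs_of_pos hx1] at hx2
    · rwa [Real.dist_eq, sub_zero,
        abs_of_nonneg (integral_nonneg fun x => abs_nonneg _)] at hx3
  choose a ha1 ha2 ha3 using hA
  have hle1 : (1:ℝ)/(C+1) ≤ 1 := by
    rw [div_le_one hC1pos]; linarith
  have ha2' : ∀ n, a n < 1/(C+1) := fun n => (ha2 n).trans_le (min_le_right _ _)
  have halt1 : ∀ n, a n < 1 := fun n => lt_of_lt_of_le (ha2' n) hle1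
  -- basic bounds on minimizers
  have hTVle : ∀ b : ℝ, 0 < b → TVw (F b) ≤ TVw fstar := by
    intro b hb
    have h1 := (hF b hb).2 fstar hstar_mem
    have h2 := hstar_opt (F b) (hF b hb).1
    nlinarith
  have hTVge : ∀ b : ℝ, 0 < b → b < 1 → TVw (F 1) ≤ TVw (F b) := by
    intro b hb hb1
    have h1 := (hF b hb).2 (F 1) (hF 1 one_pos).1
    have h2 := (hF 1 one_pos).2 (F b) (hF b hb).1
    nlinarith
  have hNwge : ∀ b : ℝ, 0 < b → Nw fstar ≤ Nw (F b) :=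
    fun b hb => hstar_opt _ (hF b hb).1
  have hNwle : ∀ b : ℝ, 0 < b → b < 1 → Nw (F b) ≤ Nw fstar + b * C := by
    intro b hb hb1
    have h1 := (hF b hb).2 fstar hstar_mem
    have h3 := hTVge b hb hb1
    have hC : TVw fstar - TVw (F 1) ≤ C := le_max_left _ _
    nlinarith [mul_le_mul_of_nonneg_left h3 hb.le, mul_le_mul_of_nonneg_left hC hb.le]
  have haC1 : ∀ n, a n * C ≤ 1 := by
    intro n
    have h1 : a n * (C + 1) < 1 := (lt_div_iff₀ hC1pos).1 (ha2' n)
    nlinarith [ha1 n]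
  -- compactness
  obtain ⟨φ, h, hφ, hconv⟩ := hcompact (fun n => F (a n))
    (fun n => (hF _ (ha1 n)).1) (fun n => hTVle _ (ha1 n))
    (fun n => by
      have := hNwle _ (ha1 n) (halt1 n)
      have := haC1 n
      linarith)
  have hGfeas : ∀ n, F (a (φ n)) ∈ feasible := fun n => (hF _ (ha1 _)).1
  have hhfeas : h ∈ feasible := hclosed _ h hGfeas hconv
  -- a (φ n) → 0
  have haφ : Tendsto (fun n => a (φ n)) atTop (nhds 0) := by
    apply squeeze_zero (fun n => (ha1 _).le) (g := fun n : ℕ => 1/((n:ℝ)+1))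
    · intro n
      have h1 : a (φ n) < 1/((φ n : ℝ)+1) := (ha2 _).trans_le (min_le_left _ _)
      have h2 : (1:ℝ)/((φ n : ℝ)+1) ≤ 1/((n:ℝ)+1) := by
        apply one_div_le_one_div_of_le
        · positivity
        · have h3 : n ≤ φ n := hφ.le_apply
          have : ((n:ℝ)) ≤ (φ n : ℝ) := Nat.cast_le.2 h3
          linarith
      linarith
    · exact tendsto_one_div_add_atTop_nhds_zero_nat
  -- Nw h = Nw fstar
  have hNh : Nw h = Nw fstar := by
    have h1 : Nw h ≤ liminf (fun n => Nw (F (a (φ n)))) atTop := hNlsc _ h hGfeas hconv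
    have hvt : Tendsto (fun n => Nw fstar + a (φ n) * C) atTop (nhds (Nw fstar)) := by
      have := (haφ.mul_const C).const_add (Nw fstar)
      simpa using this
    have h2 : liminf (fun n => Nw (F (a (φ n)))) atTop
        ≤ liminf (fun n => Nw fstar + a (φ n) * C) atTop := by
      apply liminf_le_liminf
      · exact Eventually.of_forall fun n => hNwle _ (ha1 _) (halt1 _)
      · exact isBoundedUnder_of ⟨Nw fstar, fun n => hNwge _ (ha1 _)⟩
      · refine IsBoundedUnder.isCoboundedUnder_ge (isBoundedUnder_of ⟨Nw fstar + 1, fun n => ?_⟩)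
        have := haC1 (φ n)
        linarith
    rw [hvt.liminf_eq] at h2
    exact le_antisymm (h1.trans h2) (hstar_opt h hhfeas)
  have hTVh : TVw h ≤ TVw fstar := by
    have h1 : TVw h ≤ liminf (fun n => TVw (F (a (φ n)))) atTop := hTVlsc _ h hGfeas hconv
    have h2 : liminf (fun n => TVw (F (a (φ n)))) atTop
        ≤ liminf (fun _ : ℕ => TVw fstar) atTop := by
      apply liminf_le_liminf
      · exact Eventually.of_forall fun n => hTVle _ (ha1 _)
      · exact isBoundedUnder_of ⟨TVw (F 1), fun n => hTVge _ (ha1 _) (halt1 _)⟩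
      · exact IsBoundedUnder.isCoboundedUnder_ge
          (isBoundedUnder_of ⟨TVw fstar, fun n => le_rfl⟩)
    rw [liminf_const] at h2
    exact h1.trans h2
  have hh0 : ∫ x, |h x - fstar x| ∂μ = 0 := huniq h hhfeas hNh hTVh
  -- bridge lemma: if some ∫ |G n - h| = 0 then contradiction
  have key : ∀ n : ℕ, ∫ x, |F (a (φ n)) x - h x| ∂μ = 0 → False := by
    intro n hb0
    set g0 : X → ℝ := F (a (φ n)) with hg0def
    have hg0feas : g0 ∈ feasible := hGfeas n
    set h2f : X → ℝ := fun x => g0 x - h x + fstar x with h2fdef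
    have e1 : ∫ x, |g0 x - h2f x| ∂μ = 0 := by
      rw [← hh0]
      apply integral_congr_ae (ae_of_all _ fun x => ?_)
      simp only [h2fdef]
      congr 1
      ring
    have e2 : ∫ x, |h2f x - g0 x| ∂μ = 0 := by
      rw [← e1]
      exact integral_congr_ae (ae_of_all _ fun x => abs_sub_comm _ _)
    have e3 : ∫ x, |h2f x - fstar x| ∂μ = 0 := by
      rw [← hb0]
      apply integral_congr_ae (ae_of_all _ fun x => ?_)
      simp only [h2fdef]
      congr 1
      ring
    have e4 : ∫ x, |fstar x - h2f x| ∂μ = 0 := by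
      rw [← e3]
      exact integral_congr_ae (ae_of_all _ fun x => abs_sub_comm _ _)
    have tz : ∀ (c : ℝ), c = 0 → Tendsto (fun _ : ℕ => c) atTop (nhds (0:ℝ)) := by
      intro c hc; rw [hc]; exact tendsto_const_nhds
    have hfeas2 : h2f ∈ feasible := hclosed (fun _ => g0) h2f (fun _ => hg0feas) (tz _ e1)
    have q1 : Nw h2f ≤ Nw g0 := by
      have := hNlsc (fun _ => g0) h2f (fun _ => hg0feas) (tz _ e1)
      simpa [liminf_const] using this
    have q2 : Nw g0 ≤ Nw h2f := by
      have := hNlsc (fun _ => h2f) g0 (fun _ => hfeas2) (tz _ e2)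
      simpa [liminf_const] using this
    have q3 : Nw fstar ≤ Nw h2f := by
      have := hNlsc (fun _ => h2f) fstar (fun _ => hfeas2) (tz _ e3)
      simpa [liminf_const] using this
    have q4 : Nw h2f ≤ Nw fstar := by
      have := hNlsc (fun _ => fstar) h2f (fun _ => hstar_mem) (tz _ e4)
      simpa [liminf_const] using this
    have hNg0 : Nw g0 = Nw fstar := by linarith
    have hz := huniq g0 hg0feas hNg0 (hTVle _ (ha1 _))
    have := ha3 (φ n)
    rw [← hg0def] at this
    linarith
  by_cases hex : ∃ n : ℕ, ∫ x, |F (a (φ n)) x - h x| ∂μ = 0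
  · obtain ⟨n, hn⟩ := hex
    exact key n hn
  · push_neg at hex
    -- all integrals positive hence integrable
    have hBint : ∀ n, Integrable (fun x => |F (a (φ n)) x - h x|) μ := by
      intro n
      by_contra hni
      exact hex n (integral_undef hni)
    have hAint : ∀ n, Integrable (fun x => |F (a (φ n)) x - fstar x|) μ := by
      intro n
      by_contra hni
      have h0 := integral_undef hni
      have := ha3 (φ n)
      rw [h0] at this
      linarith
    -- convergence in L1 implies convergence in measure, extract a.e. subsequence
    have hsn : ∀ n, eLpNorm ((fun x => |F (a (φ n)) x - h x|) - 0) 1 μ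
        = ENNReal.ofReal (∫ x, |F (a (φ n)) x - h x| ∂μ) := by
      intro n
      rw [sub_zero, eLpNorm_one_eq_lintegral_enorm,
        ofReal_integral_eq_lintegral_ofReal (hBint n) (ae_of_all _ fun x => abs_nonneg _)]
      exact lintegral_congr fun x => by rw [Real.enorm_eq_ofReal (abs_nonneg _)]
    have hsn' : Tendsto (fun n => eLpNorm ((fun x => |F (a (φ n)) x - h x|) - 0) 1 μ)
        atTop (nhds 0) := by
      simp only [hsn]
      have := ENNReal.tendsto_ofReal (hconv)
      simpa using this
    have htim : TendstoInMeasure μ (fun n => fun x => |F (a (φ n)) x - h x|) atTop 0 :=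
      tendstoInMeasure_of_tendsto_eLpNorm one_ne_zero
        (fun n => (hBint n).aestronglyMeasurable) aestronglyMeasurable_const hsn'
    obtain ⟨ns, hns, hae⟩ := htim.exists_seq_tendsto_ae
    -- a.e. convergence of |G - fstar| to |h - fstar|
    have haeU : ∀ᵐ x ∂μ, Tendsto (fun k => |F (a (φ (ns k))) x - fstar x|) atTop
        (nhds (|h x - fstar x|)) := by
      filter_upwards [hae] with x hx
      rw [tendsto_iff_dist_tendsto_zero]
      apply squeeze_zero (fun k => dist_nonneg)
        (g := fun k => |F (a (φ (ns k))) x - h x|)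
      · intro k
        rw [Real.dist_eq]
        calc |(|F (a (φ (ns k))) x - fstar x| - |h x - fstar x|)|
            ≤ |(F (a (φ (ns k))) x - fstar x) - (h x - fstar x)| :=
              abs_abs_sub_abs_le_abs_sub _ _
          _ = |F (a (φ (ns k))) x - h x| := by congr 1; ring
      · simpa using hx
    have hUaesm : AEStronglyMeasurable (fun x => |h x - fstar x|) μ :=
      aestronglyMeasurable_of_tendsto_ae atTop
        (fun k => (hAint (ns k)).aestronglyMeasurable) haeU
    have hUint : Integrable (fun x => |h x - fstar x|) μ := by
      apply Integrable.mono' ((hAint (ns 0)).add (hBint (ns 0))) hUaesm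
      apply ae_of_all _ fun x => ?_
      rw [Real.norm_eq_abs, abs_abs]
      calc |h x - fstar x| = |(F (a (φ (ns 0))) x - fstar x) - (F (a (φ (ns 0))) x - h x)| := by
            congr 1; ring
        _ ≤ |F (a (φ (ns 0))) x - fstar x| + |F (a (φ (ns 0))) x - h x| := abs_sub _ _
    have hU0 : (fun x => |h x - fstar x|) =ᵐ[μ] 0 :=
      (integral_eq_zero_iff_of_nonneg (fun x => abs_nonneg _) hUint).1 hh0
    have hhf : h =ᵐ[μ] fstar := by
      filter_upwards [hU0] with x hx
      have : |h x - fstar x| = 0 := hx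
      have := abs_eq_zero.1 this
      linarith [sub_eq_zero.1 this]
    have heq : ∀ n, ∫ x, |F (a (φ n)) x - fstar x| ∂μ = ∫ x, |F (a (φ n)) x - h x| ∂μ := by
      intro n
      apply integral_congr_ae
      filter_upwards [hhf] with x hx
      rw [hx]
    have hεle : (ε:ℝ) ≤ 0 := by
      apply ge_of_tendsto hconv
      apply Eventually.of_forall fun n => ?_
      rw [← heq n]
      exact ha3 (φ n)
    linarith
end
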